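/- Let G be a finite abelian group and J, H ≤ G with J ⊄ H. Then tr(ρ_H · P) ≥ 1/2, where P is the projection onto span{|χ⟩ : χ ∉ J^⊥}. -/

import Mathlib

open scoped BigOperators ComplexConjugate

noncomputable section

variable {G : Type*}

/-- The annihilator `H^⊥` of a subgroup `H` of a (finite) abelian group `G`
inside the character group `Ĝ = G →* ℂˣ`: the characters trivial on `H`. -/
def annihilator [CommGroup G] (H : Subgroup G) : Subgroup (G →* ℂˣ) where
  carrier := {χ | ∀ h ∈ H, χ h = 1}
  one_mem' := fun h _ => rfl
  mul_mem' := fun {a b} ha hb h hh => by simp [ha h hh, hb h hh]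
  inv_mem' := fun {a} ha h hh => by simp [ha h hh]

/-- The normalized coset state `|cH⟩ = (1/√|H|) ∑_{h∈H} e_{ch}` in `ℂ[G]`. -/
def cosetState [CommGroup G] [Fintype G] [DecidableEq G] (H : Subgroup G) (c : G) :
    EuclideanSpace ℂ G :=
  ((Real.sqrt (Nat.card H) : ℂ))⁻¹ • ∑ᶠ h ∈ (H : Set G), EuclideanSpace.single (c * h) (1 : ℂ)

/-- The normalized character state `|χ⟩ = (1/√|G|) ∑_{g∈G} χ(g) e_g` in `ℂ[G]`. -/
def charState [CommGroup G] [Fintype G] [DecidableEq G] (χ : G →* ℂˣ) : EuclideanSpace ℂ G :=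
  ((Real.sqrt (Fintype.card G) : ℂ))⁻¹ • ∑ g : G, (χ g : ℂ) • EuclideanSpace.single g (1 : ℂ)

/-- The outer product `|v⟩⟨v|` as a matrix: `(|v⟩⟨v|)_{ij} = v i * conj (v j)`. -/
def outer [Fintype G] (v : EuclideanSpace ℂ G) : Matrix G G ℂ :=
  Matrix.of fun i j => v i * conj (v j)

section Counting
variable [CommGroup G] [Finite G]

lemma heroou (G' : Type*) [CommGroup G'] [Finite G'] :
    HasEnoughRootsOfUnity ℂ (Monoid.exponent G') := by
  haveI : NeZero (Monoid.exponent G') := ⟨Monoid.exponent_ne_zero_of_finite⟩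
  infer_instance

lemma finite_dual : Finite (G →* ℂˣ) := by
  haveI := heroou G
  exact (CommGroup.monoidHom_mulEquiv_of_hasEnoughRootsOfUnity G ℂ).elim
    fun e => Finite.of_equiv G e.symm.toEquiv

lemma card_dual (G' : Type*) [CommGroup G'] [Finite G'] :
    Nat.card (G' →* ℂˣ) = Nat.card G' := by
  haveI := heroou G'
  exact (CommGroup.monoidHom_mulEquiv_of_hasEnoughRootsOfUnity G' ℂ).elim
    fun e => Nat.card_eq_of_bijective e e.bijective

noncomputable def annEquiv (H : Subgroup G) : (G ⧸ H →* ℂˣ) ≃ (annihilator H) where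
  toFun φ := ⟨φ.comp (QuotientGroup.mk' H), fun h hh => by
    simp [MonoidHom.comp_apply, (QuotientGroup.eq_one_iff h).mpr hh]⟩
  invFun ψ := QuotientGroup.lift H ψ.1 (fun h hh => MonoidHom.mem_ker.mpr (ψ.2 h hh))
  left_inv φ := MonoidHom.ext fun q => QuotientGroup.induction_on q fun g => rfl
  right_inv ψ := rfl

lemma card_annihilator (H : Subgroup G) :
    Nat.card (annihilator H) * Nat.card H = Nat.card G := by
  have h1 : Nat.card (annihilator H) = Nat.card (G ⧸ H) := by
    rw [← Nat.card_eq_of_bijective _ (annEquiv H).bijective, card_dual]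
  rw [h1, ← Subgroup.card_eq_card_quotient_mul_card_subgroup]

lemma exists_char (J H : Subgroup G) (hJH : ¬ J ≤ H) :
    ∃ χ : G →* ℂˣ, χ ∈ annihilator H ∧ χ ∉ annihilator J := by
  obtain ⟨j, hjJ, hjH⟩ := SetLike.not_le_iff_exists.mp hJH
  haveI := heroou (G ⧸ H)
  have hj1 : (QuotientGroup.mk' H j) ≠ 1 := by
    simpa [QuotientGroup.eq_one_iff] using hjH
  obtain ⟨φ, hφ⟩ := CommGroup.exists_apply_ne_one_of_hasEnoughRootsOfUnity (G ⧸ H) ℂ hj1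
  refine ⟨φ.comp (QuotientGroup.mk' H), fun h hh => by
    simp [MonoidHom.comp_apply, (QuotientGroup.eq_one_iff h).mpr hh], fun hmem => ?_⟩
  exact hφ (hmem j hjJ)

open Finset in
lemma count_main (J H : Subgroup G) (hJH : ¬ J ≤ H) [Fintype (G →* ℂˣ)]
    [DecidablePred fun χ : G →* ℂˣ => χ ∈ annihilator H]
    [DecidablePred fun χ : G →* ℂˣ => χ ∈ annihilator J] :
    Nat.card G ≤
      2 * (univ.filter fun χ : G →* ℂˣ => χ ∈ annihilator H ∧ χ ∉ annihilator J).card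
        * Nat.card H := by
  classical
  set a := Nat.card (annihilator H) with ha
  set b := Nat.card ((annihilator H ⊓ annihilator J : Subgroup (G →* ℂˣ))) with hb
  set N := (univ.filter fun χ : G →* ℂˣ => χ ∈ annihilator H ∧ χ ∉ annihilator J).card with hN
  obtain ⟨χ₀, hχ₀H, hχ₀J⟩ := exists_char J H hJH
  -- N + b = a
  have hsplit : N + b = a := by
    have h1 := Finset.card_filter_add_card_filter_not
      (s := univ.filter fun χ : G →* ℂˣ => χ ∈ annihilator H)
      (fun χ : G →* ℂˣ => χ ∈ annihilator J)
    rw [Finset.filter_filter, Finset.filter_filter] at h1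
    have ha' : a = (univ.filter fun χ : G →* ℂˣ => χ ∈ annihilator H).card := by
      rw [ha, Nat.card_eq_fintype_card, Fintype.card_subtype]
    have hb' : b = (univ.filter fun χ : G →* ℂˣ =>
        χ ∈ annihilator H ∧ χ ∈ annihilator J).card := by
      rw [hb, Nat.card_eq_fintype_card, Fintype.card_subtype]
      congr 1
      ext χ
      simp [Subgroup.mem_inf]
    rw [ha', hb', hN]
    rw [Nat.add_comm] at h1
    convert h1 using 3
  -- 2 b ≤ a
  have h2b : 2 * b ≤ a := by
    set B' := (annihilator H ⊓ annihilator J).subgroupOf (annihilator H) with hB'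
    have hcardB' : Nat.card B' = b := Nat.card_eq_of_bijective _
      (Subgroup.subgroupOfEquivOfLe (inf_le_left)).bijective
    have hdvd : Nat.card B' ∣ a := Subgroup.card_subgroup_dvd_card B'
    obtain ⟨k, hk⟩ := hdvd
    have hane : B' ≠ ⊤ := by
      intro htop
      have : (⟨χ₀, hχ₀H⟩ : annihilator H) ∈ B' := htop ▸ Subgroup.mem_top _
      rw [hB', Subgroup.mem_subgroupOf] at this
      exact hχ₀J this.2
    have hbpos : 0 < Nat.card B' := by
      have : (1 : annihilator H) ∈ B' := Subgroup.one_mem B'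
      exact @Nat.card_pos _ ⟨⟨1, this⟩⟩ _
    have hk1 : k ≠ 1 := by
      intro h1
      rw [h1, mul_one] at hk
      exact hane (Subgroup.eq_top_of_card_eq _ hk.symm)
    have hapos : 0 < a := by
      rw [ha]; exact @Nat.card_pos _ ⟨⟨1, Subgroup.one_mem _⟩⟩ _
    have hk0 : k ≠ 0 := by
      intro h0
      rw [h0, mul_zero] at hk
      omega
    have : 2 ≤ k := by omega
    calc 2 * b = 2 * Nat.card B' := by rw [hcardB']
    _ ≤ k * Nat.card B' := Nat.mul_le_mul_right _ this
    _ = a := by rw [hk, Nat.mul_comm]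
  have hfin : a ≤ 2 * N := by omega
  calc Nat.card G = a * Nat.card H := (card_annihilator H).symm
  _ ≤ 2 * N * Nat.card H := Nat.mul_le_mul_right _ hfin

end Counting

section Analytic
open scoped Classical
variable [CommGroup G] [Fintype G] [DecidableEq G]

lemma cosetState_apply (H : Subgroup G) (c g : G) :
    cosetState H c g =
      ((Real.sqrt (Nat.card H) : ℂ))⁻¹ * (if c⁻¹ * g ∈ H then 1 else 0) := by
  classical
  rw [cosetState, ← Set.coe_toFinset (H : Set G), finsum_mem_coe_finset]
  have h1 : (∑ h ∈ (H : Set G).toFinset, EuclideanSpace.single (c * h) (1:ℂ)) g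
      = if c⁻¹ * g ∈ H then 1 else 0 := by
    rw [WithLp.ofLp_sum, Finset.sum_apply]
    have h2 : ∀ h ∈ (H : Set G).toFinset,
        EuclideanSpace.single (c * h) (1:ℂ) g = if h = c⁻¹ * g then (1:ℂ) else 0 := by
      intro h _
      rw [EuclideanSpace.single_apply]
      exact if_congr (eq_comm.trans eq_inv_mul_iff_mul_eq.symm) rfl rfl
    rw [Finset.sum_congr rfl h2,
      Finset.sum_ite_eq' ((H : Set G).toFinset) (c⁻¹ * g) (fun _ => (1:ℂ))]
    simp
  rw [PiLp.smul_apply, smul_eq_mul, h1]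

lemma charState_apply (χ : G →* ℂˣ) (g : G) :
    charState χ g = ((Real.sqrt (Fintype.card G) : ℂ))⁻¹ * χ g := by
  rw [charState, PiLp.smul_apply, smul_eq_mul, WithLp.ofLp_sum, Finset.sum_apply]
  congr 1
  rw [Finset.sum_congr rfl (fun x _ => by
    rw [PiLp.smul_apply, EuclideanSpace.single_apply, smul_eq_mul])]
  simp [Finset.sum_ite_eq]

lemma sum_char (H : Subgroup G) (χ : G →* ℂˣ) :
    ∑ h : H, ((χ h : ℂˣ) : ℂ) = if χ ∈ annihilator H then (Nat.card H : ℂ) else 0 := by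
  by_cases hmem : χ ∈ annihilator H
  · simp only [hmem, if_true]
    calc ∑ h : H, ((χ h : ℂˣ) : ℂ) = ∑ _h : H, (1 : ℂ) :=
          Finset.sum_congr rfl fun h _ => by simp [hmem h h.2]
      _ = (Nat.card H : ℂ) := by simp [Nat.card_eq_fintype_card]
  · simp only [hmem, if_false]
    obtain ⟨h₀, hh₀, hne⟩ : ∃ h₀ ∈ H, χ h₀ ≠ 1 := by
      by_contra hcon
      push_neg at hcon
      exact hmem hcon
    have key : ((χ h₀ : ℂˣ) : ℂ) * ∑ h : H, ((χ h : ℂˣ) : ℂ) = ∑ h : H, ((χ h : ℂˣ) : ℂ) := by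
      rw [Finset.mul_sum]
      exact Fintype.sum_equiv (Equiv.mulLeft (⟨h₀, hh₀⟩ : H)) _ _
        (fun h => by simp [map_mul])
    have hne' : ((χ h₀ : ℂˣ) : ℂ) ≠ 1 := fun h => hne (Units.val_eq_one.mp h)
    have hz : (((χ h₀ : ℂˣ) : ℂ) - 1) * ∑ h : H, ((χ h : ℂˣ) : ℂ) = 0 := by
      rw [sub_mul, key, one_mul, sub_self]
    rcases mul_eq_zero.mp hz with h | h
    · exact absurd (sub_eq_zero.mp h) hne'
    · exact h

lemma trace_outer (u v : EuclideanSpace ℂ G) :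
    (outer u * outer v).trace = ((Complex.normSq (∑ i, u i * conj (v i))) : ℂ) := by
  rw [← Complex.mul_conj, map_sum, Finset.sum_mul_sum]
  simp only [Matrix.trace, Matrix.diag, Matrix.mul_apply, outer, Matrix.of_apply, map_mul,
    Complex.conj_conj]
  exact Finset.sum_congr rfl fun i _ => Finset.sum_congr rfl fun j _ => by ring



lemma sum_subgroup_eq [CommGroup G] [Fintype G] (H : Subgroup G) (f : G → ℂ) :
    ∑ x : G, (if x ∈ H then f x else 0) = ∑ h : H, f ↑h := by
  classical
  rw [← Finset.sum_filter]
  exact Finset.sum_subtype _ (by simp) f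

lemma normSq_char (χ : G →* ℂˣ) (c : G) :
    Complex.normSq (χ c : ℂ) = 1 := by
  have h1 : ((χ c : ℂˣ) : ℂ) ^ (Fintype.card G) = 1 := by
    rw [← Units.val_pow_eq_pow_val, ← map_pow, pow_card_eq_one]; simp
  have h2 := Complex.norm_eq_one_of_pow_eq_one h1 Fintype.card_ne_zero
  rw [Complex.normSq_eq_norm_sq, h2]; norm_num

lemma inner_coset_char (H : Subgroup G) (c : G) (χ : G →* ℂˣ) :
    ∑ g : G, cosetState H c g * conj (charState χ g)
      = ((Real.sqrt (Nat.card H) : ℂ))⁻¹ * ((Real.sqrt (Fintype.card G) : ℂ))⁻¹ *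
        (conj ((χ c : ℂˣ) : ℂ) * conj (∑ h : H, ((χ h : ℂˣ) : ℂ))) := by
  classical
  have step1 : ∀ g : G, cosetState H c g * conj (charState χ g)
      = ((Real.sqrt (Nat.card H) : ℂ))⁻¹ * ((Real.sqrt (Fintype.card G) : ℂ))⁻¹ *
        ((if c⁻¹ * g ∈ H then 1 else 0) * conj ((χ g : ℂˣ) : ℂ)) := by
    intro g
    rw [cosetState_apply, charState_apply, map_mul, map_inv₀, Complex.conj_ofReal]
    ring
  rw [Finset.sum_congr rfl (fun g _ => step1 g), ← Finset.mul_sum]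
  congr 1
  have reidx : ∑ g : G, (if c⁻¹ * g ∈ H then (1:ℂ) else 0) * conj ((χ g : ℂˣ) : ℂ)
      = ∑ x : G, (if x ∈ H then (1:ℂ) else 0) * conj ((χ (c * x) : ℂˣ) : ℂ) := by
    refine Fintype.sum_equiv (Equiv.mulLeft c).symm _ _ (fun g => ?_)
    simp [mul_inv_cancel_left]
  rw [reidx]
  have expand : ∀ x : G, (if x ∈ H then (1:ℂ) else 0) * conj ((χ (c * x) : ℂˣ) : ℂ)
      = if x ∈ H then conj ((χ c : ℂˣ) : ℂ) * conj ((χ x : ℂˣ) : ℂ) else 0 := by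
    intro x
    by_cases hx : x ∈ H <;> simp [hx, map_mul]
  rw [Finset.sum_congr rfl (fun x _ => expand x)]
  rw [map_sum, Finset.mul_sum]
  exact sum_subgroup_eq H _

end Analytic


section Assemble
open scoped Classical
variable [CommGroup G] [Fintype G] [DecidableEq G]

lemma trace_term (H : Subgroup G) (c : G) (χ : G →* ℂˣ) :
    (outer (cosetState H c) * outer (charState χ)).trace
      = ((((Nat.card H : ℝ) * (Fintype.card G : ℝ))⁻¹ *
          (if χ ∈ annihilator H then ((Nat.card H : ℝ))^2 else 0) : ℝ) : ℂ) := by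
  rw [trace_outer, inner_coset_char, sum_char]
  norm_cast
  simp only [map_mul, map_inv₀, Complex.normSq_conj, normSq_char, Complex.normSq_ofReal, one_mul,
    apply_ite (starRingEnd ℂ), map_natCast, map_zero, apply_ite Complex.normSq,
    Complex.normSq_natCast]
  by_cases hmem : χ ∈ annihilator H
  · simp only [hmem, if_true]
    push_cast
    have e1 : Real.sqrt (Nat.card H) * Real.sqrt (Nat.card H) = ((Nat.card H : ℕ) : ℝ) :=
      Real.mul_self_sqrt (by positivity)
    have e2 : Real.sqrt (Fintype.card G) * Real.sqrt (Fintype.card G)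
        = ((Fintype.card G : ℕ) : ℝ) := Real.mul_self_sqrt (by positivity)
    calc (Real.sqrt (Nat.card H))⁻¹ * (Real.sqrt (Fintype.card G))⁻¹ *
          ((Real.sqrt (Nat.card H))⁻¹ * (Real.sqrt (Fintype.card G))⁻¹) *
          (((Nat.card H : ℕ) : ℝ) * ((Nat.card H : ℕ) : ℝ))
        = ((Real.sqrt (Nat.card H) * Real.sqrt (Nat.card H)) *
            (Real.sqrt (Fintype.card G) * Real.sqrt (Fintype.card G)))⁻¹ *
          (((Nat.card H : ℕ) : ℝ) * ((Nat.card H : ℕ) : ℝ)) := by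
          rw [mul_inv, mul_inv]; ring
      _ = (((Nat.card H : ℕ) : ℝ) * ((Fintype.card G : ℕ) : ℝ))⁻¹ *
          ((Nat.card H : ℕ) : ℝ) ^ 2 := by rw [e1, e2]; ring
  · simp [hmem]

lemma card_K (H : Subgroup G) (K : Finset G)
    (hK : ∀ g : G, ∃! c, c ∈ K ∧ c⁻¹ * g ∈ H) :
    K.card * Nat.card H = Nat.card G := by
  have hbij : Function.Bijective (fun c : {x // x ∈ K} => ((c : G) : G ⧸ H)) := by
    constructor
    · intro x y hxy
      have h1 : (y : G)⁻¹ * (x : G) ∈ H := (QuotientGroup.eq (s := H)).mp hxy.symm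
      exact Subtype.ext ((hK (x : G)).unique ⟨x.2, by simp [H.one_mem]⟩ ⟨y.2, h1⟩)
    · intro q
      refine QuotientGroup.induction_on q (fun g => ?_)
      obtain ⟨c, ⟨hcK, hcH⟩, _⟩ := hK g
      exact ⟨⟨c, hcK⟩, (QuotientGroup.eq (s := H)).mpr hcH⟩
  have h1 : Nat.card {x // x ∈ K} = Nat.card (G ⧸ H) := Nat.card_eq_of_bijective _ hbij
  rw [Nat.card_eq_finsetCard] at h1
  rw [Subgroup.card_eq_card_quotient_mul_card_subgroup H, ← h1]

end Assemble

/-- If `J` is not contained in `H`, then measuring the projection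
`P = ∑_{χ ∉ J^⊥} |χ⟩⟨χ|` on `ρ_H` succeeds with probability at least `1/2`. -/
theorem stmt12 [CommGroup G] [Fintype G] [DecidableEq G] (J H : Subgroup G) (hJH : ¬ J ≤ H)
    (K : Finset G) (hK : ∀ g : G, ∃! c, c ∈ K ∧ c⁻¹ * g ∈ H) :
    (1 : ℝ) / 2 ≤
      (Matrix.trace
        ((((Nat.card H : ℂ) / (Nat.card G : ℂ)) •
            ∑ c ∈ K, outer (cosetState H c)) *
          ∑ᶠ χ ∈ {χ : G →* ℂˣ | χ ∉ annihilator J}, outer (charState χ))).re := by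
  classical
  haveI : Finite (G →* ℂˣ) := finite_dual
  haveI : Fintype (G →* ℂˣ) := Fintype.ofFinite _
  have hset : {χ : G →* ℂˣ | χ ∉ annihilator J}
      = ↑(Finset.univ.filter fun χ : G →* ℂˣ => χ ∉ annihilator J) := by
    ext χ; simp
  rw [hset, finsum_mem_coe_finset]
  set T := Finset.univ.filter fun χ : G →* ℂˣ => χ ∉ annihilator J with hT
  set N := (Finset.univ.filter
    fun χ : G →* ℂˣ => χ ∈ annihilator H ∧ χ ∉ annihilator J).card with hNdef
  -- evaluate the trace
  have hx : ∀ c ∈ K, (outer (cosetState H c) * ∑ χ ∈ T, outer (charState χ)).trace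
      = ((((Nat.card H : ℝ) * (Fintype.card G : ℝ))⁻¹ * ((Nat.card H : ℝ))^2 * N : ℝ) : ℂ) := by
    intro c _
    rw [Matrix.mul_sum, Matrix.trace_sum,
      Finset.sum_congr rfl (fun χ _ => trace_term H c χ), ← Complex.ofReal_sum]
    congr 1
    rw [← Finset.mul_sum, Finset.sum_ite, Finset.sum_const_zero, add_zero, Finset.sum_const,
      hT, Finset.filter_filter, nsmul_eq_mul]
    have hcard : (Finset.univ.filter
        fun χ : G →* ℂˣ => χ ∉ annihilator J ∧ χ ∈ annihilator H).card = N := by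
      rw [hNdef]
      congr 1
      apply Finset.filter_congr
      intro χ _
      exact and_comm
    rw [hcard]
    ring
  have htr : (((Nat.card H : ℂ) / (Nat.card G : ℂ)) •
        ∑ c ∈ K, outer (cosetState H c)) * ∑ χ ∈ T, outer (charState χ)
      = ((Nat.card H : ℂ) / (Nat.card G : ℂ)) •
        ∑ c ∈ K, (outer (cosetState H c) * ∑ χ ∈ T, outer (charState χ)) := by
    rw [smul_mul_assoc, Matrix.sum_mul]
  rw [htr, Matrix.trace_smul, Matrix.trace_sum, Finset.sum_congr rfl hx, Finset.sum_const,
    smul_eq_mul, nsmul_eq_mul]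
  have hre : (((Nat.card H : ℂ) / (Nat.card G : ℂ)) * ((K.card : ℂ) *
        ((((Nat.card H : ℝ) * (Fintype.card G : ℝ))⁻¹ * ((Nat.card H : ℝ))^2 * N : ℝ) : ℂ)))
      = ((((Nat.card H : ℝ) / (Nat.card G : ℝ)) * ((K.card : ℝ) *
        (((Nat.card H : ℝ) * (Fintype.card G : ℝ))⁻¹ * ((Nat.card H : ℝ))^2 * N)) : ℝ) : ℂ) := by
    push_cast
    ring
  rw [hre, Complex.ofReal_re]
  -- numeric endgame
  have hKH : (K.card : ℝ) * (Nat.card H : ℝ) = (Nat.card G : ℝ) := by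
    exact_mod_cast congrArg (Nat.cast : ℕ → ℝ) (card_K H K hK)
  have hcount : (Nat.card G : ℝ) ≤ 2 * (N : ℝ) * (Nat.card H : ℝ) := by
    have := count_main J H hJH
    exact_mod_cast this
  have hHpos : (0 : ℝ) < (Nat.card H : ℝ) := by
    exact_mod_cast Nat.card_pos
  have hGpos : (0 : ℝ) < (Nat.card G : ℝ) := by
    exact_mod_cast Nat.card_pos
  have hGeq : (Fintype.card G : ℝ) = (Nat.card G : ℝ) := by
    rw [Nat.card_eq_fintype_card]
  rw [hGeq]
  clear hJH hK hset
  rw [div_mul_eq_mul_div, le_div_iff₀ hGpos]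
  have hexp : (Nat.card H : ℝ) * ((K.card : ℝ) *
      (((Nat.card H : ℝ) * (Nat.card G : ℝ))⁻¹ * ((Nat.card H : ℝ))^2 * N))
      = (Nat.card H : ℝ) * N := by
    have hk0 : (K.card : ℝ) ≠ 0 := by
      intro h0
      rw [h0, zero_mul] at hKH
      exact hGpos.ne' hKH.symm
    rw [← hKH]
    field_simp
  rw [hexp]
  linarith [hcount]
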